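/- Let χ ⊆ {1,...,n} be nonempty, with γ_i > 0, x_i(t) > 0, s_i(t) ∈ [0,1], β_{ij} ≥ 0, and ẋ_i(t) = ∑_{j=1}^n s_i(t) β_{ij} x_j(t) − γ_i x_i(t). Define the cluster effective reproduction number R̄_χ^t = (∑_{i∈χ} γ_i x_i(t) R̄_i^t) / (∑_{i∈χ} γ_i x_i(t)), where R̄_i^t = ∑_j s_i(t) β_{ij} x_j(t)/(γ_i x_i(t)). Then R̄_χ^t = 1 if and only if ∑_{i∈χ} ẋ_i(t) = 0; R̄_χ^t > 1 if and only if ∑_{i∈χ} ẋ_i(t) > 0; and R̄_χ^t < 1 if and only if ∑_{i∈χ} ẋ_i(t) < 0. -/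
import Mathlib


open Finset

/-- The cluster effective reproduction number
`R̄_χ^t = (∑_{i∈χ} γ_i x_i R̄_i^t)/(∑_{i∈χ} γ_i x_i)` satisfies the threshold
conditions: it equals (resp. exceeds, resp. is below) one iff the sum of the infection
derivatives `ẋ_i = ∑_j s_i β_{ij} x_j − γ_i x_i` over the cluster is zero
(resp. positive, resp. negative). -/
theorem cluster_ERN_threshold (n : ℕ)
    (χ : Finset (Fin n)) (hχ : χ.Nonempty)
    (s x γ : Fin n → ℝ) (β : Fin n → Fin n → ℝ)
    (hγ : ∀ i, 0 < γ i)
    (hx : ∀ i, 0 < x i)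
    (hs : ∀ i, s i ∈ Set.Icc (0 : ℝ) 1)
    (hβ : ∀ i j, 0 ≤ β i j) :
    ((∑ i ∈ χ, γ i * x i * (∑ j, s i * β i j * x j / (γ i * x i))) /
        (∑ i ∈ χ, γ i * x i) = 1 ↔
      (∑ i ∈ χ, ((∑ j, s i * β i j * x j) - γ i * x i)) = 0) ∧
    ((∑ i ∈ χ, γ i * x i * (∑ j, s i * β i j * x j / (γ i * x i))) /
        (∑ i ∈ χ, γ i * x i) > 1 ↔
      (∑ i ∈ χ, ((∑ j, s i * β i j * x j) - γ i * x i)) > 0) ∧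
    ((∑ i ∈ χ, γ i * x i * (∑ j, s i * β i j * x j / (γ i * x i))) /
        (∑ i ∈ χ, γ i * x i) < 1 ↔
      (∑ i ∈ χ, ((∑ j, s i * β i j * x j) - γ i * x i)) < 0) := by

  have hD : 0 < ∑ i ∈ χ, γ i * x i :=
    Finset.sum_pos (fun i _ => mul_pos (hγ i) (hx i)) hχ
  have hnum : ∀ i ∈ χ, γ i * x i * (∑ j, s i * β i j * x j / (γ i * x i))
      = ∑ j, s i * β i j * x j := by
    intro i _
    have h : (γ i * x i) ≠ 0 := ne_of_gt (mul_pos (hγ i) (hx i))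
    rw [← Finset.sum_div, mul_div_cancel₀ _ h]
  rw [Finset.sum_congr rfl hnum, Finset.sum_sub_distrib]
  constructor
  · rw [div_eq_one_iff_eq (ne_of_gt hD), sub_eq_zero, eq_comm]
  constructor
  · rw [gt_iff_lt, one_lt_div hD]; exact sub_pos.symm
  · rw [div_lt_one hD]; exact sub_neg.symm
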